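/- For alternant codes over K ⊂ F with the same support x and multiplier y: A_{r+t-1}(x,y) ⋆ (RS_t(x) ∩ K^n) ⊆ A_r(x,y), for any integers r ≥ 1 and t ≥ 1. -/

import Mathlib

open Polynomial

def GRS {F : Type*} [Field F] {n : ℕ} (k : ℕ) (x y : Fin n → F) : Set (Fin n → F) :=
  {v | ∃ f : F[X], f.degree < k ∧ ∀ i, v i = y i * f.eval (x i)}

/-- The alternant code `A_t(x,y)` over `K`. -/
def alternantSet (K : Type*) {F : Type*} [Field K] [Field F] [Algebra K F] {n : ℕ}
    (t : ℕ) (x y : Fin n → F) : Set (Fin n → F) :=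
  {v | (∀ c ∈ GRS t x y, ∑ i, c i * v i = 0) ∧ ∀ i, v i ∈ Set.range (algebraMap K F)}

/-- The Reed-Solomon code `RS_t(x)` restricted to vectors with entries in `K`. -/
def rsSubfield (K : Type*) {F : Type*} [Field K] [Field F] [Algebra K F] {n : ℕ}
    (t : ℕ) (x : Fin n → F) : Set (Fin n → F) :=
  {v | v ∈ GRS t x (fun _ => 1) ∧ ∀ i, v i ∈ Set.range (algebraMap K F)}

def starSet {F : Type*} [Field F] {n : ℕ} (A B : Set (Fin n → F)) : Set (Fin n → F) :=
  {w | ∃ a ∈ A, ∃ b ∈ B, w = a * b}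

/-! If `c = y · f(x)` with `deg f < r` and `b = g(x)` with `deg g < t`, then `c ⋆ b = y · (fg)(x)`
lies in `GRS_{r+t-1}(x, y)`, so `⟨c, a ⋆ b⟩ = ⟨c ⋆ b, a⟩ = 0` for every `a ∈ A_{r+t-1}(x, y)`.
Since `A_r(x, y)` is a `K`-subspace, it then contains the whole span. -/

namespace Polynomial

theorem degree_mul_lt_add_sub_one {R : Type*} [Semiring R] {f g : R[X]} {r t : ℕ}
    (hf : f.degree < r) (hg : g.degree < t) : (f * g).degree < ↑(r + t - 1) := by
  rcases eq_or_ne (f * g) 0 with hfg | hfg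
  · rw [hfg, degree_zero]
    exact WithBot.bot_lt_coe _
  have hf₀ : f ≠ 0 := left_ne_zero_of_mul hfg
  have hg₀ : g ≠ 0 := right_ne_zero_of_mul hfg
  rw [← natDegree_lt_iff_degree_lt hf₀] at hf
  rw [← natDegree_lt_iff_degree_lt hg₀] at hg
  rw [← natDegree_lt_iff_degree_lt hfg]
  have := natDegree_mul_le (p := f) (q := g)
  omega

end Polynomial

theorem GRS.mul_mem {F : Type*} [Field F] {n : ℕ} {r t : ℕ} {x y z : Fin n → F}
    {c b : Fin n → F} (hc : c ∈ GRS r x y) (hb : b ∈ GRS t x z) :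
    c * b ∈ GRS (r + t - 1) x (y * z) := by
  obtain ⟨f, hf, hcf⟩ := hc
  obtain ⟨g, hg, hbg⟩ := hb
  exact ⟨f * g, degree_mul_lt_add_sub_one hf hg, fun i => by
    simp only [Pi.mul_apply, hcf i, hbg i, eval_mul]
    ring⟩

section Alternant

variable (K : Type*) {F : Type*} [Field K] [Field F] [Algebra K F] {n : ℕ}

def alternantSubmodule (t : ℕ) (x y : Fin n → F) : Submodule K (Fin n → F) where
  carrier := alternantSet K t x y
  add_mem' := by
    rintro a b ⟨ha, haK⟩ ⟨hb, hbK⟩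
    refine ⟨fun c hc => ?_, fun i => ?_⟩
    · simp only [Pi.add_apply, mul_add, Finset.sum_add_distrib, ha c hc, hb c hc, add_zero]
    · obtain ⟨u, hu⟩ := haK i
      obtain ⟨v, hv⟩ := hbK i
      exact ⟨u + v, by simp [hu, hv]⟩
  zero_mem' := ⟨fun _ _ => by simp, fun _ => ⟨0, by simp⟩⟩
  smul_mem' := by
    rintro k v ⟨hv, hvK⟩
    refine ⟨fun c hc => ?_, fun i => ?_⟩
    · simp only [Pi.smul_apply, mul_smul_comm, ← Finset.smul_sum, hv c hc, smul_zero]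
    · obtain ⟨u, hu⟩ := hvK i
      exact ⟨k * u, by simp [hu, Algebra.smul_def]⟩

variable {K}

theorem mul_mem_alternantSet {r t : ℕ} {x y a b : Fin n → F}
    (ha : a ∈ alternantSet K (r + t - 1) x y) (hb : b ∈ rsSubfield K t x) :
    a * b ∈ alternantSet K r x y := by
  obtain ⟨ha, haK⟩ := ha
  obtain ⟨hb, hbK⟩ := hb
  refine ⟨fun c hc => ?_, fun i => ?_⟩
  · have hcb : c * b ∈ GRS (r + t - 1) x y := by
      simpa only [mul_one] using GRS.mul_mem (z := 1) hc hb
    calc ∑ i, c i * (a * b) i = ∑ i, (c * b) i * a i := by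
          refine Finset.sum_congr rfl fun i _ => ?_
          simp only [Pi.mul_apply]
          ring
      _ = 0 := ha _ hcb
  · obtain ⟨u, hu⟩ := haK i
    obtain ⟨v, hv⟩ := hbK i
    exact ⟨u * v, by simp [hu, hv]⟩

end Alternant

theorem alternant_star_rs_subset_general (K F : Type*) [Field K] [Field F] [Algebra K F]
    {n : ℕ} (r t : ℕ)
    (x y : Fin n → F) :
    (Submodule.span K (starSet (alternantSet K (r + t - 1) x y) (rsSubfield K t x)) :
        Set (Fin n → F))
      ⊆ alternantSet K r x y :=
  Submodule.span_le (p := alternantSubmodule K r x y) |>.mpr <| by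
    rintro _ ⟨a, ha, b, hb, rfl⟩
    exact mul_mem_alternantSet ha hb

/-- `A_{r+t-1}(x,y) ⋆ (RS_t(x) ∩ Kⁿ) ⊆ A_r(x,y)`, the star product taken as a span
over `K`. -/
theorem alternant_star_rs_subset (K F : Type*) [Field K] [Field F] [Algebra K F]
    {n : ℕ} (r t : ℕ) (hr : 1 ≤ r) (ht : 1 ≤ t)
    (x y : Fin n → F) (hx : Function.Injective x) (hy : ∀ i, y i ≠ 0) :
    (Submodule.span K (starSet (alternantSet K (r + t - 1) x y) (rsSubfield K t x)) :
        Set (Fin n → F))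
      ⊆ alternantSet K r x y :=
  alternant_star_rs_subset_general K F r t x y
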